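/- arXiv:2512.24710 — 2 statements merged into one kernel-verified Lean document; each statement's English description precedes it below -/
import Mathlib

section
/- (Khinchine's inequality) For each 0 < l < ∞ there exist constants C₁, C₂ > 0 depending only on l such that for all m ≥ 1 and all complex numbers b₁,…,b_m: C₁ (Σ_{k=1}^m |b_k|²)^{l/2} ≤ ∫_0^1 |Σ_{k=1}^m b_k r_k(t)|^l dt ≤ C₂ (Σ_{k=1}^m |b_k|²)^{l/2}. -/
open scoped BigOperators
open Finset MeasureTheory

noncomputable section

/-- The Rademacher functions on `[0,1]`: `rademacher k` is `r_{k+1}` of the paper,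
`r₁(t) = 1` if `0 ≤ t - ⌊t⌋ < 1/2` and `-1` otherwise, and `r_{k+1}(t) = r₁(2^k t)`. -/
def rademacher (k : ℕ) (t : ℝ) : ℝ :=
  if Int.fract (2 ^ k * t) < 1 / 2 then 1 else -1

/-!
On the dyadic interval `[j/2^m, (j+1)/2^m)` the functions `r_1, …, r_m` are constant, with signs
read off from the binary digits of `j`, so the integral is the average of `|∑ ε_k b_k|^l` over all
`2^m` sign vectors `ε`. Splitting `j` by its last binary digit, the average over `m + 1` signs is
the mean of the averages at `x + b_{m+1}` and `x - b_{m+1}`; with the parallelogram law this makes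
`∑ |b_k|²` the second moment, and with `cosh x ≤ exp (x²/2)` it gives the subgaussian bound
`avg exp (∑ ε_k a_k) ≤ exp (∑ a_k² / 2)` for real `a`.

The upper bound follows from `|t|^l ≤ ⌈l⌉! e^{|t|}` and the subgaussian bound, applied to the real
and imaginary parts of the normalised coefficients. For `l ≥ 2` the lower bound is Jensen's
inequality applied to the second moment; for `l < 2` it is Cauchy–Schwarz,
`(∑ x²)² ≤ (∑ x^l) (∑ x^{4-l})`, combined with the upper bound for the `(4 - l)`-th moment.
-/

open scoped Nat

lemma rademacher_eq_neg_one_pow {k i : ℕ} {t : ℝ} (h₁ : i / 2 ^ (k + 1) ≤ t)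
    (h₂ : t < (i + 1) / 2 ^ (k + 1)) : rademacher k t = (-1) ^ i := by
  rw [pow_succ', div_le_iff₀ (by positivity)] at h₁
  rw [pow_succ', lt_div_iff₀ (by positivity)] at h₂
  obtain ⟨q, c, hc, rfl⟩ : ∃ q c, c < 2 ∧ i = 2 * q + c :=
    ⟨i / 2, i % 2, Nat.mod_lt _ two_pos, (Nat.div_add_mod i 2).symm⟩
  push_cast at h₁ h₂
  have hc₁ : (c : ℝ) ≤ 1 := by exact_mod_cast Nat.le_of_lt_succ hc
  have hfract : Int.fract (2 ^ k * t) = 2 ^ k * t - q :=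
    Int.fract_eq_iff.2 ⟨by linarith [c.cast_nonneg (α := ℝ)], by linarith, q, by push_cast; ring⟩
  rw [rademacher, hfract, pow_add, pow_mul]
  interval_cases c
  · rw [if_pos (by norm_num at h₂; linarith)]; norm_num
  · rw [if_neg (by norm_num at h₁; linarith)]; norm_num

def dyadicSign (m k j : ℕ) : ℝ := (-1) ^ (j / 2 ^ (m - (k + 1)))

lemma rademacher_eq_dyadicSign {m k j : ℕ} (hk : k < m) {t : ℝ} (h₁ : j / 2 ^ m ≤ t)
    (h₂ : t < (j + 1) / 2 ^ m) : rademacher k t = dyadicSign m k j := by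
  set e := m - (k + 1)
  have hm : (2 : ℝ) ^ m = 2 ^ (k + 1) * 2 ^ e := by rw [← pow_add]; congr 1; omega
  have he : 0 < 2 ^ e := by positivity
  apply rademacher_eq_neg_one_pow
  · calc ((j / 2 ^ e : ℕ) : ℝ) / 2 ^ (k + 1) = ((j / 2 ^ e * 2 ^ e : ℕ) : ℝ) / 2 ^ m := by
          rw [hm]; push_cast; field_simp
      _ ≤ j / 2 ^ m := by gcongr; exact Nat.div_mul_le_self j _
      _ ≤ t := h₁
  · calc t < (j + 1) / 2 ^ m := h₂
      _ ≤ ((j / 2 ^ e * 2 ^ e + 2 ^ e : ℕ) : ℝ) / 2 ^ m := by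
          gcongr; exact_mod_cast Nat.lt_div_mul_add he
      _ = ((j / 2 ^ e : ℕ) + 1) / 2 ^ (k + 1) := by rw [hm]; push_cast; field_simp

lemma dyadicSign_succ_of_lt {m k : ℕ} (hk : k < m) {q c : ℕ} (hc : c < 2) :
    dyadicSign (m + 1) k (2 * q + c) = dyadicSign m k q := by
  rw [dyadicSign, dyadicSign, show m + 1 - (k + 1) = m - (k + 1) + 1 by omega, pow_succ',
    ← Nat.div_div_eq_div_mul, show (2 * q + c) / 2 = q by omega]

lemma dyadicSign_succ_self (m q c : ℕ) : dyadicSign (m + 1) m (2 * q + c) = (-1) ^ c := by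
  simp [dyadicSign, pow_add, pow_mul]

lemma sum_range_two_mul {M : Type*} [AddCommMonoid M] (f : ℕ → M) (n : ℕ) :
    ∑ j ∈ range (2 * n), f j = ∑ q ∈ range n, (f (2 * q) + f (2 * q + 1)) := by
  induction n with
  | zero => simp
  | succ n ih => rw [mul_add, sum_range_succ, sum_range_succ, sum_range_succ, ih, add_assoc]

section DyadicSum

variable {E : Type*} [AddCommGroup E] [Module ℝ E]

def dyadicSum (b : ℕ → E) (m j : ℕ) : E := ∑ k ∈ range m, dyadicSign m k j • b k

lemma dyadicSum_succ (b : ℕ → E) (m q : ℕ) {c : ℕ} (hc : c < 2) :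
    dyadicSum b (m + 1) (2 * q + c) = dyadicSum b m q + (-1 : ℝ) ^ c • b m := by
  rw [dyadicSum, sum_range_succ, dyadicSign_succ_self]
  congr 1
  exact sum_congr rfl fun k hk => by rw [dyadicSign_succ_of_lt (mem_range.1 hk) hc]

lemma sum_dyadicSum_succ {M : Type*} [AddCommMonoid M] (F : E → M) (b : ℕ → E) (m : ℕ) :
    ∑ j ∈ range (2 ^ (m + 1)), F (dyadicSum b (m + 1) j) =
      ∑ q ∈ range (2 ^ m), (F (dyadicSum b m q + b m) + F (dyadicSum b m q - b m)) := by
  rw [pow_succ', sum_range_two_mul]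
  refine sum_congr rfl fun q _ => ?_
  have h₀ := dyadicSum_succ b m q (c := 0) two_pos
  rw [add_zero] at h₀
  rw [h₀, dyadicSum_succ b m q one_lt_two]
  simp [sub_eq_add_neg]

lemma dyadicSum_neg (b : ℕ → E) (m j : ℕ) : dyadicSum (-b) m j = -dyadicSum b m j := by
  simp [dyadicSum]

lemma dyadicSum_smul (c : ℝ) (b : ℕ → E) (m j : ℕ) :
    dyadicSum (c • b) m j = c • dyadicSum b m j := by
  simp [dyadicSum, smul_sum, smul_comm c]

lemma map_dyadicSum {F : Type*} [AddCommGroup F] [Module ℝ F] (L : E →ₗ[ℝ] F) (b : ℕ → E)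
    (m j : ℕ) : L (dyadicSum b m j) = dyadicSum (L ∘ b) m j := by
  simp [dyadicSum]

end DyadicSum

lemma setIntegral_Ioc_zero_one_eq_sum_div {n : ℕ} (hn : 0 < n) {g : ℝ → ℝ} {v : ℕ → ℝ}
    (hg : ∀ j < n, ∀ t ∈ Set.Ico (j / n : ℝ) ((j + 1) / n), g t = v j) :
    ∫ t in Set.Ioc 0 1, g t = (∑ j ∈ range n, v j) / n := by
  set a : ℕ → ℝ := fun j => j / n
  have hn' : (0 : ℝ) < n := by exact_mod_cast hn
  have hlen : ∀ j, a (j + 1) - a j = 1 / n := fun j => by simp only [a]; push_cast; ring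
  have hle : ∀ j, a j ≤ a (j + 1) := fun j => by linarith [hlen j, one_div_pos.2 hn']
  have hae : ∀ j < n, g =ᵐ[volume.restrict (Set.Ioc (a j) (a (j + 1)))] fun _ => v j :=
    fun j hj => by
      rw [← Measure.restrict_congr_set Ico_ae_eq_Ioc]
      exact (ae_restrict_mem measurableSet_Ico).mono fun t ht => hg j hj t (by simpa [a] using ht)
  have hpiece : ∀ j < n, ∫ t in a j..a (j + 1), g t = v j / n := fun j hj => by
    rw [intervalIntegral.integral_of_le (hle j), integral_congr_ae (hae j hj), setIntegral_const,
      measureReal_def, Real.volume_Ioc, ENNReal.toReal_ofReal (sub_nonneg.2 (hle j)), hlen j,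
      smul_eq_mul]
    ring
  have hint : ∀ j < n, IntervalIntegrable g volume (a j) (a (j + 1)) := fun j hj =>
    (intervalIntegrable_iff_integrableOn_Ioc_of_le (hle j)).2 <|
      (integrableOn_const measure_Ioc_lt_top.ne).congr_fun_ae (hae j hj).symm
  have hsum := intervalIntegral.sum_integral_adjacent_intervals hint
  rw [sum_congr rfl fun j hj => hpiece j (mem_range.1 hj), ← sum_div] at hsum
  simpa [a, hn'.ne', intervalIntegral.integral_of_le zero_le_one] using hsum.symm

lemma setIntegral_Ioc_zero_one_comp_sum_rademacher {E : Type*} [AddCommGroup E] [Module ℝ E]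
    (F : E → ℝ) (b : ℕ → E) (m : ℕ) :
    ∫ t in Set.Ioc 0 1, F (∑ k ∈ range m, rademacher k t • b k) =
      (∑ j ∈ range (2 ^ m), F (dyadicSum b m j)) / 2 ^ m := by
  have h := setIntegral_Ioc_zero_one_eq_sum_div (n := 2 ^ m) (by positivity)
    (g := fun t => F (∑ k ∈ range m, rademacher k t • b k)) (v := fun j => F (dyadicSum b m j))
  push_cast at h
  refine h fun j _ t ht => congrArg F <| sum_congr rfl fun k hk => ?_
  rw [rademacher_eq_dyadicSign (mem_range.1 hk) ht.1 ht.2]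

lemma sum_norm_sq_dyadicSum {E : Type*} [NormedAddCommGroup E] [InnerProductSpace ℝ E]
    (b : ℕ → E) (m : ℕ) :
    ∑ j ∈ range (2 ^ m), ‖dyadicSum b m j‖ ^ 2 = 2 ^ m * ∑ k ∈ range m, ‖b k‖ ^ 2 := by
  induction m with
  | zero => simp [dyadicSum]
  | succ m ih =>
    have parallelogram (x y : E) : ‖x + y‖ ^ 2 + ‖x - y‖ ^ 2 = 2 * ‖x‖ ^ 2 + 2 * ‖y‖ ^ 2 := by
      linear_combination parallelogram_law_with_norm ℝ x y
    rw [sum_dyadicSum_succ (fun x => ‖x‖ ^ 2), sum_congr rfl fun q _ => parallelogram _ _,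
      sum_add_distrib, ← mul_sum, ih, sum_const, card_range, sum_range_succ]
    ring

lemma sum_exp_dyadicSum_le (a : ℕ → ℝ) (m : ℕ) :
    ∑ j ∈ range (2 ^ m), Real.exp (dyadicSum a m j) ≤
      2 ^ m * Real.exp (∑ k ∈ range m, a k ^ 2 / 2) := by
  induction m with
  | zero => simp [dyadicSum]
  | succ m ih =>
    have hcosh (x : ℝ) : Real.exp (x + a m) + Real.exp (x - a m) ≤
        Real.exp x * (2 * Real.exp (a m ^ 2 / 2)) := by
      have h : Real.exp (x + a m) + Real.exp (x - a m) = Real.exp x * (2 * Real.cosh (a m)) := by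
        rw [Real.cosh_eq, sub_eq_add_neg, Real.exp_add, Real.exp_add]; ring
      rw [h]
      gcongr
      exact Real.cosh_le_exp_half_sq _
    calc ∑ j ∈ range (2 ^ (m + 1)), Real.exp (dyadicSum a (m + 1) j)
        ≤ ∑ q ∈ range (2 ^ m), Real.exp (dyadicSum a m q) * (2 * Real.exp (a m ^ 2 / 2)) := by
          rw [sum_dyadicSum_succ Real.exp]; exact sum_le_sum fun q _ => hcosh _
      _ ≤ 2 ^ m * Real.exp (∑ k ∈ range m, a k ^ 2 / 2) * (2 * Real.exp (a m ^ 2 / 2)) := by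
          rw [← sum_mul]; gcongr
      _ = 2 ^ (m + 1) * Real.exp (∑ k ∈ range (m + 1), a k ^ 2 / 2) := by
          rw [sum_range_succ, Real.exp_add]; ring

lemma abs_rpow_le_factorial_mul_exp_abs {p : ℝ} (hp : 0 ≤ p) (t : ℝ) :
    |t| ^ p ≤ ⌈p⌉₊ ! * Real.exp |t| := by
  rcases le_or_gt |t| 1 with ht | ht
  · calc |t| ^ p ≤ 1 := Real.rpow_le_one (abs_nonneg t) ht hp
      _ ≤ Real.exp |t| := Real.one_le_exp (abs_nonneg t)
      _ ≤ ⌈p⌉₊ ! * Real.exp |t| :=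
          le_mul_of_one_le_left (Real.exp_pos _).le (by exact_mod_cast ⌈p⌉₊.factorial_pos)
  · calc |t| ^ p ≤ |t| ^ (⌈p⌉₊ : ℝ) := Real.rpow_le_rpow_of_exponent_le ht.le (Nat.le_ceil p)
      _ = |t| ^ ⌈p⌉₊ := Real.rpow_natCast _ _
      _ ≤ ⌈p⌉₊ ! * Real.exp |t| := by
          rw [← div_le_iff₀' (by positivity)]
          exact Real.pow_div_factorial_le_exp |t| (abs_nonneg t) _

lemma sum_abs_rpow_dyadicSum_le {p : ℝ} (hp : 0 ≤ p) (a : ℕ → ℝ) (m : ℕ)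
    (ha : ∑ k ∈ range m, a k ^ 2 ≤ 1) :
    ∑ j ∈ range (2 ^ m), |dyadicSum a m j| ^ p ≤ 2 ^ m * (2 * ⌈p⌉₊ ! * Real.exp (1 / 2)) := by
  have hexp (a : ℕ → ℝ) (ha : ∑ k ∈ range m, a k ^ 2 ≤ 1) :
      ∑ j ∈ range (2 ^ m), Real.exp (dyadicSum a m j) ≤ 2 ^ m * Real.exp (1 / 2) :=
    (sum_exp_dyadicSum_le a m).trans <| by rw [← sum_div]; gcongr
  calc ∑ j ∈ range (2 ^ m), |dyadicSum a m j| ^ p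
      ≤ ∑ j ∈ range (2 ^ m),
          ⌈p⌉₊ ! * (Real.exp (dyadicSum a m j) + Real.exp (dyadicSum (-a) m j)) :=
        sum_le_sum fun j _ => (abs_rpow_le_factorial_mul_exp_abs hp _).trans <| by
          rw [dyadicSum_neg]; gcongr; exact Real.exp_abs_le _
    _ ≤ ⌈p⌉₊ ! * (2 ^ m * Real.exp (1 / 2) + 2 ^ m * Real.exp (1 / 2)) := by
        rw [← mul_sum, sum_add_distrib]
        gcongr
        · exact hexp a ha
        · exact hexp (-a) (by simpa using ha)
    _ = 2 ^ m * (2 * ⌈p⌉₊ ! * Real.exp (1 / 2)) := by ring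

lemma norm_rpow_le_two_rpow_mul {p : ℝ} (hp : 0 ≤ p) (z : ℂ) :
    ‖z‖ ^ p ≤ 2 ^ p * (|z.re| ^ p + |z.im| ^ p) := by
  calc ‖z‖ ^ p ≤ (2 * max |z.re| |z.im|) ^ p := by
        gcongr
        linarith [Complex.norm_le_abs_re_add_abs_im z, le_max_left |z.re| |z.im|,
          le_max_right |z.re| |z.im|]
    _ = 2 ^ p * max |z.re| |z.im| ^ p :=
        Real.mul_rpow zero_le_two (le_max_of_le_left (abs_nonneg _))
    _ ≤ 2 ^ p * (|z.re| ^ p + |z.im| ^ p) := by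
        have := Real.rpow_nonneg (abs_nonneg z.re) p
        have := Real.rpow_nonneg (abs_nonneg z.im) p
        gcongr
        rcases max_choice |z.re| |z.im| with h | h <;> rw [h] <;> linarith

def upperConst (p : ℝ) : ℝ := 2 ^ p * 4 * ⌈p⌉₊ ! * Real.exp (1 / 2)

lemma upperConst_pos (p : ℝ) : 0 < upperConst p := by
  unfold upperConst; positivity

lemma sum_norm_rpow_dyadicSum_le_of_sum_le_one {p : ℝ} (hp : 0 ≤ p) (b : ℕ → ℂ) (m : ℕ)
    (hb : ∑ k ∈ range m, ‖b k‖ ^ 2 ≤ 1) :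
    ∑ j ∈ range (2 ^ m), ‖dyadicSum b m j‖ ^ p ≤ 2 ^ m * upperConst p := by
  have hsq (k : ℕ) : ‖b k‖ ^ 2 = (b k).re ^ 2 + (b k).im ^ 2 := by
    rw [Complex.sq_norm, Complex.normSq_apply]; ring
  have hre : ∑ k ∈ range m, (b k).re ^ 2 ≤ 1 :=
    (sum_le_sum fun k _ => by rw [hsq]; nlinarith).trans hb
  have him : ∑ k ∈ range m, (b k).im ^ 2 ≤ 1 :=
    (sum_le_sum fun k _ => by rw [hsq]; nlinarith).trans hb
  calc ∑ j ∈ range (2 ^ m), ‖dyadicSum b m j‖ ^ p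
      ≤ 2 ^ p * (∑ j ∈ range (2 ^ m), |dyadicSum (fun k => (b k).re) m j| ^ p +
          ∑ j ∈ range (2 ^ m), |dyadicSum (fun k => (b k).im) m j| ^ p) := by
        rw [← sum_add_distrib, mul_sum]
        refine sum_le_sum fun j _ => (norm_rpow_le_two_rpow_mul hp _).trans_eq ?_
        rw [← Complex.reLm_coe, ← Complex.imLm_coe, map_dyadicSum, map_dyadicSum]
        rfl
    _ ≤ 2 ^ p * (2 ^ m * (2 * ⌈p⌉₊ ! * Real.exp (1 / 2)) +
          2 ^ m * (2 * ⌈p⌉₊ ! * Real.exp (1 / 2))) := by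
        gcongr
        · exact sum_abs_rpow_dyadicSum_le hp _ m hre
        · exact sum_abs_rpow_dyadicSum_le hp _ m him
    _ = 2 ^ m * upperConst p := by unfold upperConst; ring

lemma sum_norm_rpow_dyadicSum_le {p : ℝ} (hp : 0 < p) (b : ℕ → ℂ) (m : ℕ) :
    ∑ j ∈ range (2 ^ m), ‖dyadicSum b m j‖ ^ p ≤
      2 ^ m * upperConst p * (∑ k ∈ range m, ‖b k‖ ^ 2) ^ (p / 2) := by
  set s := ∑ k ∈ range m, ‖b k‖ ^ 2
  rcases (sum_nonneg fun k _ => sq_nonneg ‖b k‖ : 0 ≤ s).eq_or_lt with hs | hs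
  · have hb : ∀ k ∈ range m, b k = 0 := fun k hk => by
      simpa using (sum_eq_zero_iff_of_nonneg fun k _ => sq_nonneg ‖b k‖).1 hs.symm k hk
    have hS (j : ℕ) : dyadicSum b m j = 0 :=
      sum_eq_zero fun k hk => by rw [hb k hk, smul_zero]
    simp [hS, Real.zero_rpow hp.ne', show s = 0 from hs.symm, Real.zero_rpow (half_pos hp).ne']
  · set σ := Real.sqrt s
    have hσ : 0 < σ := Real.sqrt_pos.2 hs
    have hnormalized : ∑ k ∈ range m, ‖(σ⁻¹ • b) k‖ ^ 2 = 1 := by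
      have hσsq : σ ^ 2 = s := Real.sq_sqrt hs.le
      simp only [Pi.smul_apply, norm_smul, mul_pow, ← mul_sum, Real.norm_eq_abs, sq_abs,
        inv_pow, hσsq]
      exact inv_mul_cancel₀ hs.ne'
    have hscale (j : ℕ) : ‖dyadicSum b m j‖ ^ p = s ^ (p / 2) * ‖dyadicSum (σ⁻¹ • b) m j‖ ^ p := by
      rw [dyadicSum_smul, norm_smul, Real.norm_eq_abs, abs_inv, abs_of_pos hσ,
        Real.mul_rpow (by positivity) (norm_nonneg _), Real.inv_rpow hσ.le,
        Real.rpow_div_two_eq_sqrt p hs.le, ← mul_assoc, mul_inv_cancel₀ (by positivity), one_mul]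
    calc ∑ j ∈ range (2 ^ m), ‖dyadicSum b m j‖ ^ p
        = s ^ (p / 2) * ∑ j ∈ range (2 ^ m), ‖dyadicSum (σ⁻¹ • b) m j‖ ^ p := by
          rw [mul_sum]; exact sum_congr rfl fun j _ => hscale j
      _ ≤ s ^ (p / 2) * (2 ^ m * upperConst p) := by
          gcongr; exact sum_norm_rpow_dyadicSum_le_of_sum_le_one hp.le _ m hnormalized.le
      _ = 2 ^ m * upperConst p * s ^ (p / 2) := by ring

lemma sq_rpow_half {x : ℝ} (hx : 0 ≤ x) (l : ℝ) : (x ^ 2) ^ (l / 2) = x ^ l := by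
  rw [← Real.rpow_natCast_mul hx]; congr 1; push_cast; ring

lemma rpow_le_sum_norm_rpow_dyadicSum_of_two_le {E : Type*} [NormedAddCommGroup E]
    [InnerProductSpace ℝ E] {l : ℝ} (hl : 2 ≤ l) (b : ℕ → E) (m : ℕ) :
    2 ^ m * (∑ k ∈ range m, ‖b k‖ ^ 2) ^ (l / 2) ≤ ∑ j ∈ range (2 ^ m), ‖dyadicSum b m j‖ ^ l := by
  have h2m : (0 : ℝ) < 2 ^ m := by positivity
  have hjensen := Real.rpow_arith_mean_le_arith_mean_rpow (range (2 ^ m))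
    (fun _ => ((2 : ℝ) ^ m)⁻¹) (fun j => ‖dyadicSum b m j‖ ^ 2) (fun _ _ => by positivity)
    (by simp [h2m.ne']) (fun _ _ => by positivity) (by linarith : (1 : ℝ) ≤ l / 2)
  simp only [← mul_sum, sum_norm_sq_dyadicSum, inv_mul_cancel_left₀ h2m.ne',
    sq_rpow_half (norm_nonneg _)] at hjensen
  rwa [le_inv_mul_iff₀ h2m] at hjensen

lemma sq_sum_sq_le_sum_rpow_mul_sum_rpow {ι : Type*} (s : Finset ι) {x : ι → ℝ}
    (hx : ∀ i ∈ s, 0 ≤ x i) (l : ℝ) :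
    (∑ i ∈ s, x i ^ 2) ^ 2 ≤ (∑ i ∈ s, x i ^ l) * ∑ i ∈ s, x i ^ (4 - l) := by
  have hsq (i : ι) (hi : i ∈ s) (r : ℝ) : (x i ^ (r / 2)) ^ 2 = x i ^ r := by
    rw [← Real.rpow_mul_natCast (hx i hi)]; congr 1; ring
  have hmul (i : ι) (hi : i ∈ s) : x i ^ (l / 2) * x i ^ ((4 - l) / 2) = x i ^ 2 := by
    rw [← Real.rpow_add' (hx i hi) (by ring_nf; norm_num), ← Real.rpow_natCast]; congr 1; push_cast; ring
  have key := sum_mul_sq_le_sq_mul_sq s (fun i => x i ^ (l / 2)) (fun i => x i ^ ((4 - l) / 2))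
  rwa [sum_congr rfl hmul, sum_congr rfl fun i hi => hsq i hi l,
    sum_congr rfl fun i hi => hsq i hi (4 - l)] at key

lemma rpow_le_sum_norm_rpow_dyadicSum_of_lt_four {l : ℝ} (hl₀ : 0 < l) (hl₄ : l < 4)
    (b : ℕ → ℂ) (m : ℕ) :
    2 ^ m * (∑ k ∈ range m, ‖b k‖ ^ 2) ^ (l / 2) ≤
      upperConst (4 - l) * ∑ j ∈ range (2 ^ m), ‖dyadicSum b m j‖ ^ l := by
  set s := ∑ k ∈ range m, ‖b k‖ ^ 2
  set A := ∑ j ∈ range (2 ^ m), ‖dyadicSum b m j‖ ^ l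
  have hA : 0 ≤ A := sum_nonneg fun j _ => by positivity
  rcases (sum_nonneg fun k _ => sq_nonneg ‖b k‖ : 0 ≤ s).eq_or_lt with hs | hs
  · rw [show s = 0 from hs.symm, Real.zero_rpow (by positivity), mul_zero]
    exact mul_nonneg (upperConst_pos _).le hA
  have hCS := sq_sum_sq_le_sum_rpow_mul_sum_rpow (range (2 ^ m))
    (fun j _ => norm_nonneg (dyadicSum b m j)) l
  rw [sum_norm_sq_dyadicSum] at hCS
  have hsplit : s ^ 2 = s ^ (l / 2) * s ^ ((4 - l) / 2) := by
    rw [← Real.rpow_add hs, ← Real.rpow_natCast]; congr 1; push_cast; ring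
  refine le_of_mul_le_mul_right ?_ (by positivity : 0 < 2 ^ m * s ^ ((4 - l) / 2))
  calc 2 ^ m * s ^ (l / 2) * (2 ^ m * s ^ ((4 - l) / 2)) = (2 ^ m * s) ^ 2 := by
        rw [mul_pow, hsplit]; ring
    _ ≤ A * (2 ^ m * upperConst (4 - l) * s ^ ((4 - l) / 2)) :=
        hCS.trans (by gcongr; exact sum_norm_rpow_dyadicSum_le (by linarith) b m)
    _ = upperConst (4 - l) * A * (2 ^ m * s ^ ((4 - l) / 2)) := by ring

def lowerConst (l : ℝ) : ℝ := min 1 (upperConst (4 - l))⁻¹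

lemma lowerConst_pos (l : ℝ) : 0 < lowerConst l :=
  lt_min one_pos (inv_pos.2 (upperConst_pos _))

lemma lowerConst_mul_rpow_le_sum_norm_rpow_dyadicSum {l : ℝ} (hl : 0 < l) (b : ℕ → ℂ) (m : ℕ) :
    2 ^ m * (lowerConst l * (∑ k ∈ range m, ‖b k‖ ^ 2) ^ (l / 2)) ≤
      ∑ j ∈ range (2 ^ m), ‖dyadicSum b m j‖ ^ l := by
  set s := ∑ k ∈ range m, ‖b k‖ ^ 2
  have hs : 0 ≤ s ^ (l / 2) := by positivity
  rcases le_or_gt 2 l with h2 | h2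
  · refine le_trans ?_ (rpow_le_sum_norm_rpow_dyadicSum_of_two_le h2 b m)
    gcongr
    exact mul_le_of_le_one_left hs (min_le_left _ _)
  · have hK := upperConst_pos (4 - l)
    calc 2 ^ m * (lowerConst l * s ^ (l / 2))
        ≤ 2 ^ m * ((upperConst (4 - l))⁻¹ * s ^ (l / 2)) := by
          gcongr; exact min_le_right _ _
      _ = (upperConst (4 - l))⁻¹ * (2 ^ m * s ^ (l / 2)) := by ring
      _ ≤ (upperConst (4 - l))⁻¹ * (upperConst (4 - l) *
            ∑ j ∈ range (2 ^ m), ‖dyadicSum b m j‖ ^ l) := by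
          exact mul_le_mul_of_nonneg_left
            (rpow_le_sum_norm_rpow_dyadicSum_of_lt_four hl (by linarith) b m) (inv_nonneg.2 hK.le)
      _ = ∑ j ∈ range (2 ^ m), ‖dyadicSum b m j‖ ^ l := inv_mul_cancel_left₀ hK.ne' _

/-- **Khinchine's inequality.** For every `0 < l < ∞` there are constants `C₁, C₂ > 0`
depending only on `l` such that for all `m` and all complex `b₁, …, b_m`,
`C₁ (∑ |b_k|²)^{l/2} ≤ ∫₀¹ |∑ b_k r_k(t)|^l dt ≤ C₂ (∑ |b_k|²)^{l/2}`. -/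
theorem khinchine_inequality (l : ℝ) (hl : 0 < l) :
    ∃ C₁ > (0 : ℝ), ∃ C₂ > (0 : ℝ), ∀ (m : ℕ) (b : Fin m → ℂ),
      C₁ * (∑ k, ‖b k‖ ^ (2 : ℝ)) ^ (l / 2) ≤
        (∫ t in Set.Ioc (0 : ℝ) 1, ‖∑ k : Fin m, b k * (rademacher k.1 t : ℂ)‖ ^ l) ∧
      (∫ t in Set.Ioc (0 : ℝ) 1, ‖∑ k : Fin m, b k * (rademacher k.1 t : ℂ)‖ ^ l) ≤
        C₂ * (∑ k, ‖b k‖ ^ (2 : ℝ)) ^ (l / 2) := by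
  refine ⟨lowerConst l, lowerConst_pos l, upperConst l, upperConst_pos l, fun m b => ?_⟩
  set B : ℕ → ℂ := fun k => if h : k < m then b ⟨k, h⟩ else 0
  have hbB (k : Fin m) : b k = B k := by simp [B]
  have hsq : ∑ k, ‖b k‖ ^ (2 : ℝ) = ∑ k ∈ range m, ‖B k‖ ^ 2 := by
    simp only [Real.rpow_two, hbB]
    exact Fin.sum_univ_eq_sum_range (fun k => ‖B k‖ ^ 2) m
  have hint : ∫ t in Set.Ioc (0 : ℝ) 1, ‖∑ k : Fin m, b k * (rademacher k.1 t : ℂ)‖ ^ l =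
      (∑ j ∈ range (2 ^ m), ‖dyadicSum B m j‖ ^ l) / 2 ^ m := by
    have hsum (t : ℝ) : ∑ k : Fin m, b k * (rademacher k.1 t : ℂ) =
        ∑ k ∈ range m, rademacher k t • B k := by
      simp only [hbB, mul_comm (B _), ← Complex.real_smul]
      exact Fin.sum_univ_eq_sum_range (fun k => rademacher k t • B k) m
    simp only [hsum]
    exact setIntegral_Ioc_zero_one_comp_sum_rademacher (fun z => ‖z‖ ^ l) B m
  rw [hsq, hint, le_div_iff₀ (by positivity), div_le_iff₀ (by positivity)]
  exact ⟨by linarith [lowerConst_mul_rpow_le_sum_norm_rpow_dyadicSum hl B m],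
    by linarith [sum_norm_rpow_dyadicSum_le hl B m]⟩
end
end

section
/- (Order bounded implies p-summing) Let X be a Banach space, p ≥ 1, and (Ω, Σ, m) a measure space. If T : X → L^p(Ω, m) is a bounded linear operator such that the function h(ω) = sup_{f ∈ B_X} |T f(ω)| belongs to L^p(Ω, m), then T is p-summing with π_p(T) ≤ ‖h‖_{L^p(Ω,m)}. -/
/-!
Fix `x₁, …, xₙ ∈ X`. For almost every `ω` the bound `|∑ aₖ (T xₖ)(ω)| ≤ h(ω) ‖∑ aₖ xₖ‖` holds
simultaneously for all coefficient vectors `a` (it is a closed condition in `a`, so a countable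
dense set of `a` suffices). Hence `∑ aₖ xₖ ↦ ∑ aₖ (T xₖ)(ω)` is a well-defined functional of norm
`≤ h(ω)` on the span of the `xₖ`, and Hahn–Banach extends it to `g_ω ∈ X*` with `‖g_ω‖ ≤ h(ω)`
and `g_ω(xₖ) = (T xₖ)(ω)`. Therefore `∑ |(T xₖ)(ω)|^p ≤ h(ω)^p · sup_{‖g‖ ≤ 1} ∑ |g(xₖ)|^p`,
and integrating in `ω` gives the `p`-summing inequality with constant `‖h‖_p`.
-/

open scoped BigOperators ENNReal
open Finset MeasureTheory

noncomputable section

/-- `T` is `r`-summing with constant `C`: for every finite family `x₁, …, x_m` in `X`,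
`(∑ ‖T xₖ‖^r)^{1/r} ≤ C · sup_{g ∈ B_{X*}} (∑ |g(xₖ)|^r)^{1/r}`. -/
def SummingBound {X Y : Type*} [NormedAddCommGroup X] [NormedSpace ℝ X]
    [NormedAddCommGroup Y] [NormedSpace ℝ Y] (r : ℝ) (T : X →L[ℝ] Y) (C : ℝ) : Prop :=
  ∀ (m : ℕ) (x : Fin m → X),
    (∑ k, ‖T (x k)‖ ^ r) ^ (1 / r) ≤
      C * sSup {s : ℝ | ∃ g : X →L[ℝ] ℝ, ‖g‖ ≤ 1 ∧
        s = (∑ k, |g (x k)| ^ r) ^ (1 / r)}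

/-- `T` is `r`-summing. -/
def IsSummingOp {X Y : Type*} [NormedAddCommGroup X] [NormedSpace ℝ X]
    [NormedAddCommGroup Y] [NormedSpace ℝ Y] (r : ℝ) (T : X →L[ℝ] Y) : Prop :=
  ∃ C : ℝ, 0 ≤ C ∧ SummingBound r T C

/-- The `r`-summing norm `π_r(T)`, the least admissible constant. -/
def summingNorm {X Y : Type*} [NormedAddCommGroup X] [NormedSpace ℝ X]
    [NormedAddCommGroup Y] [NormedSpace ℝ Y] (r : ℝ) (T : X →L[ℝ] Y) : ℝ :=
  sInf {C : ℝ | 0 ≤ C ∧ SummingBound r T C}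

theorem rpow_sum_abs_const_mul {ι : Type*} (s : Finset ι) (y : ι → ℝ) {t : ℝ} (ht : 0 ≤ t)
    {r : ℝ} (hr : r ≠ 0) :
    (∑ i ∈ s, |t * y i| ^ r) ^ (1 / r) = t * (∑ i ∈ s, |y i| ^ r) ^ (1 / r) := by
  simp_rw [abs_mul, abs_of_nonneg ht, Real.mul_rpow ht (abs_nonneg _), ← Finset.mul_sum]
  rw [Real.mul_rpow (by positivity) (by positivity), one_div, Real.rpow_rpow_inv ht hr]

theorem exists_dual_apply_eq_of_abs_sum_le {X : Type*} [NormedAddCommGroup X] [NormedSpace ℝ X]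
    {ι : Type*} [Fintype ι] (x : ι → X) (c : ι → ℝ) {H : ℝ} (hH : 0 ≤ H)
    (hc : ∀ a : ι → ℝ, |∑ i, a i * c i| ≤ H * ‖∑ i, a i • x i‖) :
    ∃ g : X →L[ℝ] ℝ, ‖g‖ ≤ H ∧ ∀ i, g (x i) = c i := by
  classical
  set L := Fintype.linearCombination ℝ x
  set ψ := Fintype.linearCombination ℝ c
  have hψ : ∀ a, |ψ a| ≤ H * ‖L a‖ := by
    simpa [L, ψ, Fintype.linearCombination_apply] using hc
  have hker : ∀ a b, L a = L b → ψ a = ψ b := fun a b hab => by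
    simpa [hab, sub_eq_zero] using hψ (a - b)
  obtain ⟨s, hs⟩ := L.rangeRestrict.exists_rightInverse_of_surjective L.range_rangeRestrict
  have hLs : ∀ y, L (s y) = y := fun y => congrArg Subtype.val (LinearMap.congr_fun hs y)
  -- by `hker`, `φ` is `∑ aᵢ xᵢ ↦ ∑ aᵢ cᵢ` whatever right inverse `s` was chosen
  let φ : LinearMap.range L →ₗ[ℝ] ℝ := ψ ∘ₗ s
  have hφ : ∀ y, ‖φ y‖ ≤ H * ‖y‖ := fun y => by simpa [φ, hLs] using hψ (s y)
  obtain ⟨g, hgφ, hg⟩ := exists_extension_norm_eq _ (φ.mkContinuous H hφ)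
  refine ⟨g, hg ▸ LinearMap.mkContinuous_norm_le _ hH hφ, fun i => ?_⟩
  have hxi : L (Pi.single i 1) = x i := by simp [L]
  calc g (x i) = ψ (s ⟨x i, hxi ▸ L.mem_range_self _⟩) := hgφ ⟨x i, _⟩
    _ = ψ (Pi.single i 1) := hker _ _ (by rw [hLs]; exact hxi.symm)
    _ = c i := by simp [ψ]

section WeakSumNorm

variable {X : Type*} [NormedAddCommGroup X] [NormedSpace ℝ X] {ι : Type*} [Fintype ι]

-- The supremum in `SummingBound`: the weak `ℓ^r` norm of the family `x`.
def weakSumNorm (r : ℝ) (x : ι → X) : ℝ :=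
  sSup {s : ℝ | ∃ g : X →L[ℝ] ℝ, ‖g‖ ≤ 1 ∧ s = (∑ k, |g (x k)| ^ r) ^ (1 / r)}

theorem le_weakSumNorm {r : ℝ} (hr : 0 ≤ r) (x : ι → X) {g : X →L[ℝ] ℝ} (hg : ‖g‖ ≤ 1) :
    (∑ k, |g (x k)| ^ r) ^ (1 / r) ≤ weakSumNorm r x := by
  refine le_csSup ⟨(∑ k, ‖x k‖ ^ r) ^ (1 / r), ?_⟩ ⟨g, hg, rfl⟩
  rintro s ⟨g', hg', rfl⟩
  gcongr with k
  calc |g' (x k)| ≤ ‖g'‖ * ‖x k‖ := g'.le_opNorm _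
    _ ≤ ‖x k‖ := mul_le_of_le_one_left (norm_nonneg _) hg'

theorem weakSumNorm_nonneg {r : ℝ} (hr : 0 ≤ r) (x : ι → X) : 0 ≤ weakSumNorm r x :=
  (Real.rpow_nonneg (by positivity) _).trans (le_weakSumNorm hr x (g := 0) (by simp))

theorem rpow_sum_le_norm_mul_weakSumNorm {r : ℝ} (hr : 0 < r) (x : ι → X) (g : X →L[ℝ] ℝ) :
    (∑ k, |g (x k)| ^ r) ^ (1 / r) ≤ ‖g‖ * weakSumNorm r x := by
  rcases eq_or_ne g 0 with rfl | hg
  · simp [Real.zero_rpow hr.ne', Real.zero_rpow (inv_ne_zero hr.ne')]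
  have hg' : ‖‖g‖⁻¹ • g‖ ≤ 1 := by
    rw [norm_smul, norm_inv, norm_norm, inv_mul_cancel₀ (norm_ne_zero_iff.2 hg)]
  calc (∑ k, |g (x k)| ^ r) ^ (1 / r) = (∑ k, |‖g‖ * (‖g‖⁻¹ • g) (x k)| ^ r) ^ (1 / r) := by
        simp [norm_ne_zero_iff.2 hg]
    _ = ‖g‖ * (∑ k, |(‖g‖⁻¹ • g) (x k)| ^ r) ^ (1 / r) :=
        rpow_sum_abs_const_mul _ _ (norm_nonneg g) hr.ne'
    _ ≤ ‖g‖ * weakSumNorm r x := by gcongr; exact le_weakSumNorm hr.le x hg'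

theorem sum_abs_rpow_le_of_abs_sum_le {r : ℝ} (hr : 0 < r) (x : ι → X) (c : ι → ℝ) {H : ℝ}
    (hH : 0 ≤ H) (hc : ∀ a : ι → ℝ, |∑ i, a i * c i| ≤ H * ‖∑ i, a i • x i‖) :
    ∑ i, |c i| ^ r ≤ H ^ r * weakSumNorm r x ^ r := by
  obtain ⟨g, hgH, hgc⟩ := exists_dual_apply_eq_of_abs_sum_le x c hH hc
  have hS := weakSumNorm_nonneg hr.le x
  rw [← Real.mul_rpow hH hS, ← Real.rpow_inv_le_iff_of_pos (by positivity) (by positivity) hr,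
    ← one_div]
  simp_rw [← hgc]
  exact (rpow_sum_le_norm_mul_weakSumNorm hr x g).trans (by gcongr)

end WeakSumNorm

theorem ae_forall_of_isClosed {Ω α : Type*} [MeasurableSpace Ω] {μ : Measure Ω}
    [TopologicalSpace α] [TopologicalSpace.SeparableSpace α] {P : Ω → α → Prop}
    (hP : ∀ ω, IsClosed {a | P ω a}) (h : ∀ a, ∀ᵐ ω ∂μ, P ω a) : ∀ᵐ ω ∂μ, ∀ a, P ω a := by
  obtain ⟨D, hDc, hD⟩ := TopologicalSpace.exists_countable_dense α
  filter_upwards [(ae_ball_iff hDc).2 fun a _ => h a] with ω hω a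
  exact (hP ω).closure_subset_iff.2 hω (hD a)

theorem MeasureTheory.Lp.norm_rpow_eq_integral {Ω E : Type*} [MeasurableSpace Ω] {μ : Measure Ω}
    [NormedAddCommGroup E] {pe : ℝ≥0∞} [Fact (1 ≤ pe)] (hpe : pe ≠ ∞) (f : Lp E pe μ) :
    ‖f‖ ^ pe.toReal = ∫ ω, ‖f ω‖ ^ pe.toReal ∂μ := by
  have hpe0 : pe ≠ 0 := (zero_lt_one.trans_le Fact.out).ne'
  rw [Lp.norm_def, toReal_eLpNorm (Lp.aestronglyMeasurable f),
    lpNorm_eq_integral_norm_rpow_toReal hpe0 hpe (Lp.aestronglyMeasurable f),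
    Real.rpow_inv_rpow (integral_nonneg fun _ => by positivity)
      (ENNReal.toReal_ne_zero.2 ⟨hpe0, hpe⟩)]

section OrderBounded

variable {X : Type*} [NormedAddCommGroup X] [NormedSpace ℝ X] {Ω : Type*} [MeasurableSpace Ω]
  {m : Measure Ω} {pe : ℝ≥0∞} [Fact (1 ≤ pe)]

theorem ae_abs_le_mul_norm (T : X →L[ℝ] Lp ℝ pe m) {h : Ω → ℝ}
    (hT : ∀ f : X, ‖f‖ ≤ 1 → ∀ᵐ ω ∂m, |T f ω| ≤ h ω) (f : X) :
    ∀ᵐ ω ∂m, |T f ω| ≤ h ω * ‖f‖ := by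
  rcases eq_or_ne f 0 with rfl | hf
  · have hT0 : ⇑(T 0) =ᵐ[m] 0 := by rw [map_zero]; exact Lp.coeFn_zero ℝ pe m
    filter_upwards [hT0] with ω hω
    rw [hω, Pi.zero_apply, abs_zero, norm_zero, mul_zero]
  have hf' : 0 < ‖f‖ := norm_pos_iff.2 hf
  have hunit : ‖‖f‖⁻¹ • f‖ ≤ 1 := by
    rw [norm_smul, norm_inv, norm_norm, inv_mul_cancel₀ hf'.ne']
  filter_upwards [hT _ hunit, map_smul T ‖f‖⁻¹ f ▸ Lp.coeFn_smul ‖f‖⁻¹ (T f)] with ω hω hsmul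
  rw [hsmul, Pi.smul_apply, smul_eq_mul, abs_mul, abs_inv, abs_norm, inv_mul_le_iff₀ hf'] at hω
  linarith

theorem ae_forall_abs_sum_le {ι : Type*} [Fintype ι] (T : X →L[ℝ] Lp ℝ pe m) {h : Ω → ℝ}
    (hT : ∀ f, ∀ᵐ ω ∂m, |T f ω| ≤ h ω * ‖f‖) (x : ι → X) :
    ∀ᵐ ω ∂m, ∀ a : ι → ℝ, |∑ i, a i * T (x i) ω| ≤ h ω * ‖∑ i, a i • x i‖ := by
  refine ae_forall_of_isClosed (fun ω => isClosed_le (by fun_prop) (by fun_prop)) fun a => ?_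
  have hcoeff : ∀ᵐ ω ∂m, ∀ i, (a i • T (x i)) ω = a i * T (x i) ω :=
    ae_all_iff.2 fun i => Lp.coeFn_smul (a i) (T (x i))
  have hlin : ⇑(T (∑ i, a i • x i)) =ᵐ[m] fun ω => ∑ i, a i * T (x i) ω := by
    simp only [map_sum, map_smul]
    filter_upwards [Lp.coeFn_fun_finsetSum Finset.univ fun i => a i • T (x i), hcoeff]
      with ω hsum hsmul
    rw [hsum]; exact Finset.sum_congr rfl fun i _ => hsmul i
  filter_upwards [hT (∑ i, a i • x i), hlin] with ω hω hlinω
  rwa [hlinω] at hω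

theorem summingBound_of_ae_abs_le (hpe : pe ≠ ∞) (T : X →L[ℝ] Lp ℝ pe m) {h : Ω → ℝ}
    (hh : 0 ≤ᵐ[m] h) (hint : Integrable (fun ω => h ω ^ pe.toReal) m)
    (hT : ∀ f, ∀ᵐ ω ∂m, |T f ω| ≤ h ω * ‖f‖) :
    SummingBound pe.toReal T ((∫ ω, h ω ^ pe.toReal ∂m) ^ (1 / pe.toReal)) := by
  set p := pe.toReal
  have hp : 0 < p := ENNReal.toReal_pos (zero_lt_one.trans_le Fact.out).ne' hpe
  intro n x
  set S := weakSumNorm p x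
  have hS : 0 ≤ S := weakSumNorm_nonneg hp.le x
  have hpt : ∀ᵐ ω ∂m, ∑ k, |T (x k) ω| ^ p ≤ h ω ^ p * S ^ p := by
    filter_upwards [hh, ae_forall_abs_sum_le T hT x] with ω hω hbound
    exact sum_abs_rpow_le_of_abs_sum_le hp x _ hω hbound
  have hint_k : ∀ k, Integrable (fun ω => |T (x k) ω| ^ p) m := fun k => by
    simpa [Real.norm_eq_abs] using
      (Lp.memLp (T (x k))).integrable_norm_rpow (zero_lt_one.trans_le Fact.out).ne' hpe
  have hint_h : 0 ≤ ∫ ω, h ω ^ p ∂m :=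
    integral_nonneg_of_ae (hh.mono fun ω hω => Real.rpow_nonneg hω p)
  have hnorm : ∀ k, ‖T (x k)‖ ^ p = ∫ ω, |T (x k) ω| ^ p ∂m := fun k => by
    simpa [Real.norm_eq_abs] using Lp.norm_rpow_eq_integral hpe (T (x k))
  calc (∑ k, ‖T (x k)‖ ^ p) ^ (1 / p) = (∫ ω, ∑ k, |T (x k) ω| ^ p ∂m) ^ (1 / p) := by
        rw [integral_finsetSum _ fun k _ => hint_k k]
        simp_rw [hnorm]
    _ ≤ (∫ ω, h ω ^ p * S ^ p ∂m) ^ (1 / p) :=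
        Real.rpow_le_rpow (integral_nonneg fun ω => by positivity)
          (integral_mono_ae (integrable_finsetSum _ fun k _ => hint_k k) (hint.mul_const _) hpt)
          (by positivity)
    _ = (∫ ω, h ω ^ p ∂m) ^ (1 / p) * S := by
        rw [integral_mul_const, Real.mul_rpow hint_h (by positivity), one_div,
          Real.rpow_rpow_inv hS hp.ne']

end OrderBounded

theorem SummingBound.isSummingOp {X Y : Type*} [NormedAddCommGroup X] [NormedSpace ℝ X]
    [NormedAddCommGroup Y] [NormedSpace ℝ Y] {r : ℝ} {T : X →L[ℝ] Y} {C : ℝ}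
    (hT : SummingBound r T C) (hC : 0 ≤ C) : IsSummingOp r T :=
  ⟨C, hC, hT⟩

theorem SummingBound.summingNorm_le {X Y : Type*} [NormedAddCommGroup X] [NormedSpace ℝ X]
    [NormedAddCommGroup Y] [NormedSpace ℝ Y] {r : ℝ} {T : X →L[ℝ] Y} {C : ℝ}
    (hT : SummingBound r T C) (hC : 0 ≤ C) : summingNorm r T ≤ C :=
  csInf_le ⟨0, fun _ hC' => hC'.1⟩ ⟨hC, hT⟩

theorem orderBounded_implies_summing_general {X : Type*}
    [NormedAddCommGroup X] [NormedSpace ℝ X]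
    {Ω : Type*} [MeasurableSpace Ω] (m : Measure Ω)
    {p : ℝ} (hp : 1 ≤ p) {pe : ℝ≥0∞} [Fact (1 ≤ pe)] (hpe : pe = ENNReal.ofReal p)
    (T : X →L[ℝ] Lp ℝ pe m) (h : Ω → ℝ)
    (hLp : Integrable (fun ω => h ω ^ p) m)
    (hdom : ∀ f : X, ‖f‖ ≤ 1 → ∀ᵐ ω ∂m, |(T f) ω| ≤ h ω) :
    IsSummingOp p T ∧ summingNorm p T ≤ (∫ ω, h ω ^ p ∂m) ^ (1 / p) := by
  have hpe_top : pe ≠ ∞ := hpe ▸ ENNReal.ofReal_ne_top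
  obtain rfl : p = pe.toReal := by rw [hpe, ENNReal.toReal_ofReal (zero_le_one.trans hp)]
  have hh : 0 ≤ᵐ[m] h := (hdom 0 (by simp)).mono fun ω hω => (abs_nonneg _).trans hω
  have hbound := summingBound_of_ae_abs_le hpe_top T hh hLp (ae_abs_le_mul_norm T hdom)
  have hC : 0 ≤ (∫ ω, h ω ^ pe.toReal ∂m) ^ (1 / pe.toReal) :=
    Real.rpow_nonneg (integral_nonneg_of_ae (hh.mono fun ω hω => Real.rpow_nonneg hω _)) _
  exact ⟨hbound.isSummingOp hC, hbound.summingNorm_le hC⟩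

/-- **Order bounded implies `p`-summing.** If `T : X → L^p(Ω, m)` is a bounded operator
and there is `h ∈ L^p(m)`, `h ≥ 0`, dominating `|T f|` a.e. for every `f` in the unit
ball of `X`, then `T` is `p`-summing with `π_p(T) ≤ ‖h‖_{L^p}`. -/
theorem orderBounded_implies_summing {X : Type*}
    [NormedAddCommGroup X] [NormedSpace ℝ X] [CompleteSpace X]
    {Ω : Type*} [MeasurableSpace Ω] (m : Measure Ω)
    {p : ℝ} (hp : 1 ≤ p) {pe : ℝ≥0∞} [Fact (1 ≤ pe)] (hpe : pe = ENNReal.ofReal p)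
    (T : X →L[ℝ] Lp ℝ pe m) (h : Ω → ℝ) (hpos : ∀ ω, 0 ≤ h ω) (hmeas : Measurable h)
    (hLp : Integrable (fun ω => h ω ^ p) m)
    (hdom : ∀ f : X, ‖f‖ ≤ 1 → ∀ᵐ ω ∂m, |(T f) ω| ≤ h ω) :
    IsSummingOp p T ∧ summingNorm p T ≤ (∫ ω, h ω ^ p ∂m) ^ (1 / p) :=
  orderBounded_implies_summing_general m hp hpe T h hLp hdom
end
end
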